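/- arXiv:1711.08339 — 2 statements merged into one kernel-verified Lean document; each statement's English description precedes it below -/
import Mathlib

section
/- Let Ω ⊂ ℝ^d be a bounded domain, ω an A2 weight on Ω, and u a minimizer of J(ω,v,Ω) = ∫_Ω (ω|∇v|² + χ_{{v>0}}) dx subject to its own boundary values. Then div(ω∇u) is a nonnegative distribution in Ω; that is, for every nonnegative test function φ ∈ C_c^∞(Ω) one has ∫_Ω ω(x) ∇u(x)·∇φ(x) dx ≤ 0. -/
open MeasureTheory ENNReal Metric Set Filter
open scoped RealInnerProductSpace ENNReal NNReal

noncomputable section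

/-- Euclidean space `ℝ^d`. -/
abbrev Euc (d : ℕ) := EuclideanSpace ℝ (Fin d)

variable {d : ℕ}

/-- Symmetrized (truncated) difference of two extended nonnegative reals,
used to express `L¹`-type convergence of `ℝ≥0∞`-valued weights. -/
def ennDiff (a b : ℝ≥0∞) : ℝ≥0∞ := (a - b) + (b - a)

/-- `φ` is a smooth test function compactly supported inside `Ω`. -/
def TestOn (Ω : Set (Euc d)) (φ : Euc d → ℝ) : Prop :=
  ContDiff ℝ (⊤ : ℕ∞) φ ∧ HasCompactSupport φ ∧ tsupport φ ⊆ Ω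

/-- `g` is the distributional (weak) gradient of `u` on `Ω`:
for every test function `φ` compactly supported in `Ω` and every direction `v`,
`∫ u ∂_v φ = - ∫ ⟪g, v⟫ φ`. -/
def IsWeakGradOn (Ω : Set (Euc d)) (u : Euc d → ℝ) (g : Euc d → Euc d) : Prop :=
  ∀ φ : Euc d → ℝ, TestOn Ω φ → ∀ v : Euc d,
    ∫ x in Ω, u x * fderiv ℝ φ x v = - ∫ x in Ω, ⟪g x, v⟫ * φ x

/-- `u ∈ L²(Ω, ω dx)`. -/
def MemL2W (Ω : Set (Euc d)) (ω : Euc d → ℝ≥0∞) (u : Euc d → ℝ) : Prop :=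
  AEMeasurable u (volume.restrict Ω) ∧ (∫⁻ x in Ω, ENNReal.ofReal ((u x) ^ 2) * ω x) < ⊤

/-- A vector field belongs to `L²(Ω, ω dx)^d`. -/
def MemL2WVec (Ω : Set (Euc d)) (ω : Euc d → ℝ≥0∞) (g : Euc d → Euc d) : Prop :=
  AEMeasurable g (volume.restrict Ω) ∧ (∫⁻ x in Ω, ENNReal.ofReal (‖g x‖ ^ 2) * ω x) < ⊤

/-- `u ∈ H¹(Ω, ω)` with (weak) gradient `g`. -/
def MemH1W (Ω : Set (Euc d)) (ω : Euc d → ℝ≥0∞) (u : Euc d → ℝ) (g : Euc d → Euc d) : Prop :=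
  MemL2W Ω ω u ∧ MemL2WVec Ω ω g ∧ IsWeakGradOn Ω u g

/-- The square of the weighted `H¹`-norm of a pair (function, gradient). -/
def H1errW (Ω : Set (Euc d)) (ω : Euc d → ℝ≥0∞) (u : Euc d → ℝ) (g : Euc d → Euc d) : ℝ≥0∞ :=
  ∫⁻ x in Ω, (ENNReal.ofReal ((u x) ^ 2) + ENNReal.ofReal (‖g x‖ ^ 2)) * ω x

/-- `u ∈ H¹₀(Ω, ω)`: `u ∈ H¹(Ω, ω)` and `u` is approximated, in the weighted `H¹` norm,
by smooth functions compactly supported in `Ω`. -/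
def MemH10W (Ω : Set (Euc d)) (ω : Euc d → ℝ≥0∞) (u : Euc d → ℝ) (g : Euc d → Euc d) : Prop :=
  MemH1W Ω ω u g ∧
  ∃ φ : ℕ → Euc d → ℝ, (∀ n, TestOn Ω (φ n)) ∧
    Tendsto (fun n => H1errW Ω ω (fun x => u x - φ n x) (fun x => g x - gradient (φ n) x))
      atTop (nhds 0)

/-- `ω` is an `A₂` weight on `Ω` with `A₂` constant `C₁`: `ω` is measurable, positive a.e.,
`ω` and `ω⁻¹` are integrable on balls contained in `Ω` and the `A₂` condition
`(⨍_B ω)(⨍_B ω⁻¹) ≤ C₁` holds on every such ball. -/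
def IsA2On (Ω : Set (Euc d)) (ω : Euc d → ℝ≥0∞) (C₁ : ℝ≥0∞) : Prop :=
  Measurable ω ∧ (∀ᵐ x ∂(volume.restrict Ω), 0 < ω x) ∧
  ∀ z : Euc d, ∀ r : ℝ, 0 < r → ball z r ⊆ Ω →
    (∫⁻ x in ball z r, ω x) < ⊤ ∧ (∫⁻ x in ball z r, (ω x)⁻¹) < ⊤ ∧
    (∫⁻ x in ball z r, ω x) * (∫⁻ x in ball z r, (ω x)⁻¹) ≤ C₁ * (volume (ball z r)) ^ 2

/-- The generalized functional `∫_Ω (ω |∇u|² + ε β(u)) dx`, where the gradient is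
carried as explicit data `g`. -/
def JwB (Ω : Set (Euc d)) (ω : Euc d → ℝ≥0∞) (ε : ℝ) (β : ℝ → ℝ)
    (u : Euc d → ℝ) (g : Euc d → Euc d) : ℝ≥0∞ :=
  ∫⁻ x in Ω, (ω x * ENNReal.ofReal (‖g x‖ ^ 2) + ENNReal.ofReal (ε * β (u x)))

/-- The characteristic function `χ_{(0,∞)}`, so that `χpos ∘ u = χ_{{u > 0}}`. -/
def χpos : ℝ → ℝ := fun t => if 0 < t then 1 else 0

/-- The Alt–Caffarelli type functional `J(ω, u, Ω) = ∫_Ω (ω |∇u|² + χ_{{u>0}}) dx`. -/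
def Jw (Ω : Set (Euc d)) (ω : Euc d → ℝ≥0∞) (u : Euc d → ℝ) (g : Euc d → Euc d) : ℝ≥0∞ :=
  JwB Ω ω 1 χpos u g

/-- `u` minimizes the functional `JwB Ω ω ε β` subject to its own boundary values on `Ω`. -/
def IsMinB (Ω : Set (Euc d)) (ω : Euc d → ℝ≥0∞) (ε : ℝ) (β : ℝ → ℝ)
    (u : Euc d → ℝ) (g : Euc d → Euc d) : Prop :=
  MemH1W Ω ω u g ∧
  ∀ v : Euc d → ℝ, ∀ gv : Euc d → Euc d, MemH1W Ω ω v gv →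
    MemH10W Ω ω (fun x => v x - u x) (fun x => gv x - g x) →
    JwB Ω ω ε β u g ≤ JwB Ω ω ε β v gv

/-- `u` is a local minimizer of `JwB · ω ε β` in `D` : it minimizes on every
subdomain compactly contained in `D`, subject to its own boundary values. -/
def IsLocMinB (D : Set (Euc d)) (ω : Euc d → ℝ≥0∞) (ε : ℝ) (β : ℝ → ℝ)
    (u : Euc d → ℝ) (g : Euc d → Euc d) : Prop :=
  ∀ Ω' : Set (Euc d), IsOpen Ω' → IsCompact (closure Ω') → closure Ω' ⊆ D →
    IsMinB Ω' ω ε β u g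

/-- `u` minimizes `J(ω, ·, Ω)` subject to its own boundary values. -/
def IsMinJ (Ω : Set (Euc d)) (ω : Euc d → ℝ≥0∞) (u : Euc d → ℝ) (g : Euc d → Euc d) : Prop :=
  IsMinB Ω ω 1 χpos u g

/-- `u` is a local minimizer of `J(ω, ·, D)`. -/
def IsLocMinJ (D : Set (Euc d)) (ω : Euc d → ℝ≥0∞) (u : Euc d → ℝ) (g : Euc d → Euc d) : Prop :=
  IsLocMinB D ω 1 χpos u g

/-- Hypothesis (H2) at the point `z`: the rescaled weights
`ω_λ(x) = λ^{|α|} ω(z + λ x)` converge in `L¹_loc`, as `λ → 0⁺`, to `ω₀`. -/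
def H2At (ω ω₀ : Euc d → ℝ≥0∞) (z : Euc d) (α : ℝ) : Prop :=
  ∀ R : ℝ, 0 < R →
    Tendsto (fun lam : ℝ =>
        ∫⁻ x in ball (0 : Euc d) R,
          ennDiff (ENNReal.ofReal (lam ^ (-α)) * ω (z + lam • x)) (ω₀ x))
      (nhdsWithin 0 (Ioi 0)) (nhds 0)

end

namespace MSaux

variable {d : ℕ}

lemma cpt_finite {Ω : Set (Euc d)} (hΩo : IsOpen Ω) {f : Euc d → ℝ≥0∞}
    (hf : ∀ z : Euc d, ∀ r : ℝ, 0 < r → ball z r ⊆ Ω → (∫⁻ x in ball z r, f x) < ⊤)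
    {K : Set (Euc d)} (hK : IsCompact K) (hKΩ : K ⊆ Ω) :
    (∫⁻ x in K, f x) < ⊤ := by
  have hr : ∀ z ∈ K, ∃ r : ℝ, 0 < r ∧ ball z r ⊆ Ω := by
    intro z hz
    obtain ⟨r, hr, hrb⟩ := Metric.isOpen_iff.1 hΩo z (hKΩ hz)
    exact ⟨r, hr, hrb⟩
  classical
  set r : Euc d → ℝ := fun z => if h : z ∈ K then (hr z h).choose else 1 with hrdef
  have hrpos : ∀ z ∈ K, 0 < r z ∧ ball z (r z) ⊆ Ω := by
    intro z hz; rw [hrdef]; simp only [dif_pos hz]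
    exact ⟨(hr z hz).choose_spec.1, (hr z hz).choose_spec.2⟩
  obtain ⟨t, htK, hcov⟩ := hK.elim_nhds_subcover (fun z => ball z (r z))
    (fun z hz => ball_mem_nhds z (hrpos z hz).1)
  have hcov' : K ⊆ ⋃ z : ↥t, ball (z : Euc d) (r z) := by
    intro x hx
    obtain ⟨z, hz, hxz⟩ := Set.mem_iUnion₂.1 (hcov hx)
    exact Set.mem_iUnion.2 ⟨⟨z, hz⟩, hxz⟩
  calc (∫⁻ x in K, f x) ≤ ∫⁻ x in ⋃ z : ↥t, ball (z : Euc d) (r z), f x :=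
        lintegral_mono_set hcov'
    _ ≤ ∑' z : ↥t, ∫⁻ x in ball (z : Euc d) (r z), f x := lintegral_iUnion_le _ _
    _ < ⊤ := by
        rw [tsum_fintype]
        refine ENNReal.sum_lt_top.2 fun z _ => ?_
        have hz := htK z z.2
        exact hf z (r z) (hrpos z hz).1 (hrpos z hz).2

lemma inner_gradient (f : Euc d → ℝ) (x v : Euc d) : ⟪gradient f x, v⟫ = fderiv ℝ f x v := by
  rw [gradient, InnerProductSpace.toDual_symm_apply]

lemma gradient_const_mul {f : Euc d → ℝ} (hf : Differentiable ℝ f) (c : ℝ) (x : Euc d) :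
    gradient (fun y => c * f y) x = c • gradient f x := by
  rw [gradient, gradient, fderiv_const_mul (hf x)]
  exact (InnerProductSpace.toDual ℝ (Euc d)).symm.map_smul c _

lemma gradient_zero_of_notMem_tsupport {f : Euc d → ℝ} {x : Euc d} (hx : x ∉ tsupport f) :
    gradient f x = 0 := by
  have h : fderiv ℝ f x = 0 :=
    Function.notMem_support.mp (fun h => hx (support_fderiv_subset ℝ h))
  simp [gradient, h]

lemma lintegral_lt_top_of_bound {μ : Measure (Euc d)} {g b : Euc d → ℝ≥0∞} {K : Set (Euc d)}
    (hK : MeasurableSet K) (hb : ∀ᵐ x ∂μ, g x ≤ K.indicator b x)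
    (hfin : (∫⁻ x in K, b x ∂μ) < ⊤) : (∫⁻ x, g x ∂μ) < ⊤ := by
  calc (∫⁻ x, g x ∂μ) ≤ ∫⁻ x, K.indicator b x ∂μ := lintegral_mono_ae hb
    _ = ∫⁻ x in K, b x ∂μ := lintegral_indicator hK b
    _ < ⊤ := hfin

lemma integrable_of_bound {μ : Measure (Euc d)} {f : Euc d → ℝ}
    (hf : AEStronglyMeasurable f μ) {K : Set (Euc d)} (hK : MeasurableSet K)
    {b : Euc d → ℝ≥0∞} (hb : ∀ᵐ x ∂μ, ENNReal.ofReal |f x| ≤ K.indicator b x)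
    (hfin : (∫⁻ x in K, b x ∂μ) < ⊤) : Integrable f μ := by
  refine ⟨hf, ?_⟩
  rw [hasFiniteIntegral_iff_norm]
  simp only [Real.norm_eq_abs]
  exact lintegral_lt_top_of_bound hK hb hfin


lemma ae_finK {Ω : Set (Euc d)} (hΩo : IsOpen Ω) {ω : Euc d → ℝ≥0∞} {C₁ : ℝ≥0∞}
    (hω : IsA2On Ω ω C₁) {K : Set (Euc d)} (hK : IsCompact K) (hKΩ : K ⊆ Ω) :
    ∀ᵐ x ∂(volume.restrict Ω), x ∈ K → ω x < ⊤ := by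
  have hfin : (∫⁻ x in K, ω x) < ⊤ :=
    cpt_finite hΩo (fun z r hr hb => (hω.2.2 z r hr hb).1) hK hKΩ
  have hae : ∀ᵐ x ∂(volume.restrict K), ω x < ⊤ := ae_lt_top hω.1 hfin.ne
  have hSm : MeasurableSet {x : Euc d | ¬ ω x < ⊤} := by
    have he : {x : Euc d | ¬ ω x < ⊤} = {x | ω x = ⊤} := by
      ext x; simp [lt_top_iff_ne_top]
    rw [he]; exact hω.1 (measurableSet_singleton ⊤)
  have h0 : volume ({x : Euc d | ¬ ω x < ⊤} ∩ K) = 0 := by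
    have h1 := ae_iff.1 hae
    rwa [Measure.restrict_apply hSm] at h1
  rw [ae_iff]
  have hsub : {x : Euc d | ¬(x ∈ K → ω x < ⊤)} ⊆ {x : Euc d | ¬ ω x < ⊤} ∩ K := by
    intro x hx
    simp only [Set.mem_setOf_eq] at hx ⊢
    push_neg at hx
    exact ⟨not_lt.2 hx.2, hx.1⟩
  refine measure_mono_null hsub (le_antisymm ((Measure.restrict_apply_le _ _).trans h0.le) zero_le)

/-- Finiteness of `∫ ‖c‖² ω` for continuous `c` compactly supported in `Ω`. -/
lemma lintegral_sq_test {Ω : Set (Euc d)} (hΩo : IsOpen Ω) {ω : Euc d → ℝ≥0∞} {C₁ : ℝ≥0∞}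
    (hω : IsA2On Ω ω C₁) {E : Type*} [NormedAddCommGroup E] {c : Euc d → E}
    (hc : Continuous c) (hcs : HasCompactSupport c) (hcΩ : tsupport c ⊆ Ω) :
    (∫⁻ x in Ω, ENNReal.ofReal (‖c x‖ ^ 2) * ω x) < ⊤ := by
  obtain ⟨M, hM⟩ := hcs.exists_bound_of_continuous hc
  have hKm : MeasurableSet (tsupport c) := (isClosed_tsupport c).measurableSet
  refine lintegral_lt_top_of_bound (μ := volume.restrict Ω) hKm
    (b := fun x => ENNReal.ofReal (M ^ 2) * ω x) (Filter.Eventually.of_forall fun x => ?_) ?_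
  · by_cases hx : x ∈ tsupport c
    · rw [Set.indicator_of_mem hx]
      refine mul_le_mul_left (ENNReal.ofReal_le_ofReal ?_) _
      have h1 := hM x
      have h2 : (0:ℝ) ≤ ‖c x‖ := norm_nonneg _
      nlinarith
    · rw [Set.indicator_of_notMem hx, image_eq_zero_of_notMem_tsupport hx]
      simp
  · have h1 : (∫⁻ x in tsupport c, ENNReal.ofReal (M ^ 2) * ω x ∂(volume.restrict Ω))
        = ENNReal.ofReal (M ^ 2) * ∫⁻ x in tsupport c, ω x ∂(volume.restrict Ω) :=
      lintegral_const_mul' _ _ ENNReal.ofReal_ne_top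
    rw [h1, Measure.restrict_restrict hKm, Set.inter_eq_self_of_subset_left hcΩ]
    exact ENNReal.mul_lt_top ENNReal.ofReal_lt_top
      (cpt_finite hΩo (fun z r hr hb => (hω.2.2 z r hr hb).1) hcs hcΩ)

lemma ofReal_abs_le_amgm {h : ℝ} {w : ℝ≥0∞} (hw0 : 0 < w) (hwt : w < ⊤) :
    ENNReal.ofReal |h| ≤ 2⁻¹ * (ENNReal.ofReal (h ^ 2) * w + w⁻¹) := by
  set a := w.toReal with ha_def
  have ha : 0 < a := ENNReal.toReal_pos hw0.ne' hwt.ne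
  have hwa : w = ENNReal.ofReal a := (ENNReal.ofReal_toReal hwt.ne).symm
  rw [hwa, ← ENNReal.ofReal_inv_of_pos ha, ← ENNReal.ofReal_mul (sq_nonneg h),
    ← ENNReal.ofReal_add (by positivity) (by positivity),
    show ((2:ℝ≥0∞))⁻¹ = ENNReal.ofReal 2⁻¹ by
      rw [ENNReal.ofReal_inv_of_pos (by norm_num : (0:ℝ) < 2)]; norm_num,
    ← ENNReal.ofReal_mul (by norm_num : (0:ℝ) ≤ 2⁻¹)]
  refine ENNReal.ofReal_le_ofReal ?_
  have h1 : 0 ≤ (|h| * a - 1) ^ 2 := sq_nonneg _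
  have h2 : a * a⁻¹ = 1 := mul_inv_cancel₀ ha.ne'
  have h4 : h ^ 2 = |h| ^ 2 := (sq_abs h).symm
  have key : |h| * a ≤ 2⁻¹ * (h ^ 2 * a + a⁻¹) * a := by
    have e : 2⁻¹ * (h ^ 2 * a + a⁻¹) * a = 2⁻¹ * (h ^ 2 * a ^ 2) + 2⁻¹ := by
      field_simp
    rw [e]; nlinarith
  exact le_of_mul_le_mul_right key ha

/-- If `h ∈ L²(Ω, ω)` and `c` is continuous compactly supported in `Ω`, then
`h * c` is integrable on `Ω` (w.r.t. Lebesgue). -/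
lemma integrable_mul_test {Ω : Set (Euc d)} (hΩo : IsOpen Ω) {ω : Euc d → ℝ≥0∞} {C₁ : ℝ≥0∞}
    (hω : IsA2On Ω ω C₁) {h : Euc d → ℝ} (hm : AEMeasurable h (volume.restrict Ω))
    (hL2 : (∫⁻ x in Ω, ENNReal.ofReal ((h x) ^ 2) * ω x) < ⊤)
    {c : Euc d → ℝ} (hc : Continuous c) (hcs : HasCompactSupport c) (hcΩ : tsupport c ⊆ Ω) :
    Integrable (fun x => h x * c x) (volume.restrict Ω) := by
  obtain ⟨M, hM⟩ := hcs.exists_bound_of_continuous hc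
  have hM0 : 0 ≤ M := le_trans (norm_nonneg (c 0)) (hM 0)
  have hKm : MeasurableSet (tsupport c) := (isClosed_tsupport c).measurableSet
  have haefin := ae_finK hΩo hω hcs hcΩ
  have haepos := hω.2.1
  refine integrable_of_bound (hm.mul hc.aemeasurable).aestronglyMeasurable hKm
    (b := fun x => ENNReal.ofReal M * (2⁻¹ * (ENNReal.ofReal ((h x) ^ 2) * ω x + (ω x)⁻¹))) ?_ ?_
  · filter_upwards [haefin, haepos] with x hfin hpos
    by_cases hx : x ∈ tsupport c
    · rw [Set.indicator_of_mem hx]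
      have h1 : |h x * c x| ≤ |h x| * M := by
        rw [abs_mul]
        exact mul_le_mul_of_nonneg_left (le_trans (le_abs_self _)
          (by simpa [Real.norm_eq_abs] using hM x)) (abs_nonneg _)
      calc ENNReal.ofReal |h x * c x| ≤ ENNReal.ofReal (M * |h x|) := by
            rw [mul_comm M]; exact ENNReal.ofReal_le_ofReal h1
        _ = ENNReal.ofReal M * ENNReal.ofReal |h x| := ENNReal.ofReal_mul hM0
        _ ≤ _ := mul_le_mul_right (ofReal_abs_le_amgm hpos (hfin hx)) _
    · rw [Set.indicator_of_notMem hx, image_eq_zero_of_notMem_tsupport hx]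
      simp
  · have hsplit : (∫⁻ x in tsupport c,
        ENNReal.ofReal M * (2⁻¹ * (ENNReal.ofReal ((h x) ^ 2) * ω x + (ω x)⁻¹))
          ∂(volume.restrict Ω))
        = ENNReal.ofReal M * (2⁻¹ * ((∫⁻ x in tsupport c,
            ENNReal.ofReal ((h x) ^ 2) * ω x ∂(volume.restrict Ω))
          + (∫⁻ x in tsupport c, (ω x)⁻¹ ∂(volume.restrict Ω)))) := by
      rw [lintegral_const_mul' _ _ ENNReal.ofReal_ne_top,
        lintegral_const_mul' _ _ (by norm_num : ((2:ℝ≥0∞))⁻¹ ≠ ⊤),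
        lintegral_add_left']
      exact ((ENNReal.measurable_ofReal.comp_aemeasurable
        ((hm.pow_const 2).restrict)).mul (hω.1.aemeasurable.restrict))
    rw [hsplit]
    refine ENNReal.mul_lt_top ENNReal.ofReal_lt_top (ENNReal.mul_lt_top (by norm_num) ?_)
    refine ENNReal.add_lt_top.2 ⟨?_, ?_⟩
    · rw [Measure.restrict_restrict hKm]
      exact lt_of_le_of_lt (lintegral_mono_set Set.inter_subset_right) hL2
    · rw [Measure.restrict_restrict hKm, Set.inter_eq_self_of_subset_left hcΩ]
      exact cpt_finite hΩo (fun z r hr hb => (hω.2.2 z r hr hb).2.1) hcs hcΩ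

lemma cont_fderiv_apply {ψ : Euc d → ℝ} (hψ : ContDiff ℝ (⊤ : ℕ∞) ψ) (v : Euc d) :
    Continuous fun x => fderiv ℝ ψ x v :=
  ((hψ.fderiv_right (m := (⊤ : ℕ∞)) (by simp)).clm_apply contDiff_const).continuous

lemma tsupport_fderiv_apply_subset {ψ : Euc d → ℝ} (v : Euc d) :
    tsupport (fun x => fderiv ℝ ψ x v) ⊆ tsupport ψ := by
  refine closure_minimal (fun x hx => ?_) (isClosed_tsupport ψ)
  by_contra hxt
  have h0 : fderiv ℝ ψ x = 0 :=
    Function.notMem_support.mp (fun h => hxt (support_fderiv_subset ℝ h))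
  simp [Function.mem_support, h0] at hx

/-- Smooth compactly supported functions have their gradient as weak gradient. -/
lemma isWeakGradOn_test {Ω : Set (Euc d)} {φ : Euc d → ℝ} (hφ : TestOn Ω φ) :
    IsWeakGradOn Ω φ (gradient φ) := by
  obtain ⟨hφs, hφc, hφΩ⟩ := hφ
  intro ψ hψ v
  obtain ⟨hψs, hψc, hψΩ⟩ := hψ
  have hφd : Differentiable ℝ φ := hφs.differentiable (by simp)
  have hψd : Differentiable ℝ ψ := hψs.differentiable (by simp)
  have hDψ : Continuous fun x => fderiv ℝ ψ x v := cont_fderiv_apply hψs v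
  have hDφ : Continuous fun x => fderiv ℝ φ x v := cont_fderiv_apply hφs v
  have I1 : Integrable (fun x => fderiv ℝ φ x v * ψ x) volume :=
    (hDφ.mul hψs.continuous).integrable_of_hasCompactSupport hψc.mul_left
  have I2 : Integrable (fun x => φ x * fderiv ℝ ψ x v) volume :=
    (hφs.continuous.mul hDψ).integrable_of_hasCompactSupport hφc.mul_right
  have I3 : Integrable (fun x => φ x * ψ x) volume :=
    (hφs.continuous.mul hψs.continuous).integrable_of_hasCompactSupport hφc.mul_right
  have key := integral_mul_fderiv_eq_neg_fderiv_mul_of_integrable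
    (μ := volume) (f := φ) (g := ψ) (v := v) I1 I2 I3 (fun x _ => hφd x) (fun x _ => hψd x)
  have h1 : ∫ x in Ω, φ x * fderiv ℝ ψ x v = ∫ x, φ x * fderiv ℝ ψ x v :=
    setIntegral_eq_integral_of_forall_compl_eq_zero (fun x hx => by
      rw [image_eq_zero_of_notMem_tsupport (fun hc => hx (hφΩ hc))]; ring)
  have h2 : ∫ x in Ω, ⟪gradient φ x, v⟫ * ψ x = ∫ x, ⟪gradient φ x, v⟫ * ψ x :=
    setIntegral_eq_integral_of_forall_compl_eq_zero (fun x hx => by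
      rw [image_eq_zero_of_notMem_tsupport (fun hc => hx (hψΩ hc))]; ring)
  rw [h1, h2, key]
  congr 1
  refine integral_congr_ae (Filter.Eventually.of_forall fun x => ?_)
  simp only [inner_gradient]

lemma aemeasurable_inner_const {Ω : Set (Euc d)} {g : Euc d → Euc d}
    (hg : AEMeasurable g (volume.restrict Ω)) (v : Euc d) :
    AEMeasurable (fun x => ⟪g x, v⟫) (volume.restrict Ω) := by
  have h1 : AEMeasurable (fun x => ⟪v, g x⟫) (volume.restrict Ω) :=
    ((innerSL ℝ v).continuous.measurable).comp_aemeasurable hg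
  have h2 : (fun x => (⟪g x, v⟫ : ℝ)) = fun x => ⟪v, g x⟫ :=
    funext fun x => real_inner_comm _ _
  rw [h2]; exact h1

lemma lintegral_inner_sq_lt_top {Ω : Set (Euc d)} {ω : Euc d → ℝ≥0∞} {g : Euc d → Euc d}
    (hg : (∫⁻ x in Ω, ENNReal.ofReal (‖g x‖ ^ 2) * ω x) < ⊤) (v : Euc d) :
    (∫⁻ x in Ω, ENNReal.ofReal ((⟪g x, v⟫ : ℝ) ^ 2) * ω x) < ⊤ := by
  calc (∫⁻ x in Ω, ENNReal.ofReal ((⟪g x, v⟫ : ℝ) ^ 2) * ω x)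
      ≤ ∫⁻ x in Ω, ENNReal.ofReal (‖v‖ ^ 2) * (ENNReal.ofReal (‖g x‖ ^ 2) * ω x) := by
        refine lintegral_mono fun x => ?_
        rw [← mul_assoc, ← ENNReal.ofReal_mul (by positivity)]
        refine mul_le_mul_left (ENNReal.ofReal_le_ofReal ?_) _
        nlinarith [abs_real_inner_le_norm (g x) v, sq_abs (⟪g x, v⟫ : ℝ),
          norm_nonneg (g x), norm_nonneg v, abs_nonneg (⟪g x, v⟫ : ℝ)]
    _ = ENNReal.ofReal (‖v‖ ^ 2) * ∫⁻ x in Ω, ENNReal.ofReal (‖g x‖ ^ 2) * ω x :=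
        lintegral_const_mul' _ _ ENNReal.ofReal_ne_top
    _ < ⊤ := ENNReal.mul_lt_top ENNReal.ofReal_lt_top hg

lemma lintegral_sq_add {Ω : Set (Euc d)} {ω : Euc d → ℝ≥0∞} (hmω : Measurable ω)
    {a b c : Euc d → ℝ} (hab : ∀ x, (c x) ^ 2 ≤ 2 * (a x) ^ 2 + 2 * (b x) ^ 2)
    (hma : AEMeasurable a (volume.restrict Ω))
    (ha : (∫⁻ x in Ω, ENNReal.ofReal ((a x) ^ 2) * ω x) < ⊤)
    (hb : (∫⁻ x in Ω, ENNReal.ofReal ((b x) ^ 2) * ω x) < ⊤) :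
    (∫⁻ x in Ω, ENNReal.ofReal ((c x) ^ 2) * ω x) < ⊤ := by
  have hmeas : AEMeasurable (fun x => 2 * (ENNReal.ofReal ((a x) ^ 2) * ω x))
      (volume.restrict Ω) :=
    ((ENNReal.measurable_ofReal.comp_aemeasurable (hma.pow_const 2)).mul
      hmω.aemeasurable.restrict).const_mul 2
  calc (∫⁻ x in Ω, ENNReal.ofReal ((c x) ^ 2) * ω x)
      ≤ ∫⁻ x in Ω, (2 * (ENNReal.ofReal ((a x) ^ 2) * ω x)
          + 2 * (ENNReal.ofReal ((b x) ^ 2) * ω x)) := by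
        refine lintegral_mono fun x => ?_
        have h1 : ENNReal.ofReal ((c x) ^ 2)
            ≤ ENNReal.ofReal (2 * (a x) ^ 2) + ENNReal.ofReal (2 * (b x) ^ 2) :=
          le_trans (ENNReal.ofReal_le_ofReal (hab x)) ENNReal.ofReal_add_le
        calc ENNReal.ofReal ((c x) ^ 2) * ω x
            ≤ (ENNReal.ofReal (2 * (a x) ^ 2) + ENNReal.ofReal (2 * (b x) ^ 2)) * ω x :=
              mul_le_mul_left h1 _
          _ = 2 * (ENNReal.ofReal ((a x) ^ 2) * ω x)
              + 2 * (ENNReal.ofReal ((b x) ^ 2) * ω x) := by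
              rw [ENNReal.ofReal_mul (by norm_num : (0:ℝ) ≤ 2),
                ENNReal.ofReal_mul (by norm_num : (0:ℝ) ≤ 2)]
              simp only [ENNReal.ofReal_ofNat]
              ring
    _ = 2 * (∫⁻ x in Ω, ENNReal.ofReal ((a x) ^ 2) * ω x)
        + 2 * (∫⁻ x in Ω, ENNReal.ofReal ((b x) ^ 2) * ω x) := by
        rw [lintegral_add_left' hmeas, lintegral_const_mul' _ _ (by norm_num),
          lintegral_const_mul' _ _ (by norm_num)]
    _ < ⊤ := by
        refine ENNReal.add_lt_top.2 ⟨?_, ?_⟩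
        · exact ENNReal.mul_lt_top (by norm_num) ha
        · exact ENNReal.mul_lt_top (by norm_num) hb

lemma continuous_gradient {φ : Euc d → ℝ} (hφ : ContDiff ℝ (⊤ : ℕ∞) φ) :
    Continuous (gradient φ) := by
  have h1 : Continuous (fderiv ℝ φ) := (hφ.fderiv_right (m := (⊤ : ℕ∞)) (by simp)).continuous
  exact (InnerProductSpace.toDual ℝ (Euc d)).symm.continuous.comp h1

lemma tsupport_gradient_subset {φ : Euc d → ℝ} :
    tsupport (gradient φ) ⊆ tsupport φ := by
  refine closure_minimal (fun x hx => ?_) (isClosed_tsupport φ)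
  by_contra hxt
  exact hx (gradient_zero_of_notMem_tsupport hxt)

lemma isWeakGradOn_combine {Ω : Set (Euc d)} (hΩo : IsOpen Ω) {ω : Euc d → ℝ≥0∞} {C₁ : ℝ≥0∞}
    (hω : IsA2On Ω ω C₁) {u : Euc d → ℝ} {gu : Euc d → Euc d} (hu : MemH1W Ω ω u gu)
    {φ : Euc d → ℝ} (hφ : TestOn Ω φ) (t : ℝ) :
    IsWeakGradOn Ω (fun x => u x - t * φ x) (fun x => gu x - t • gradient φ x) := by
  intro ψ hψ v
  obtain ⟨hψs, hψc, hψΩ⟩ := hψ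
  have hDc : Continuous fun x => fderiv ℝ ψ x v := cont_fderiv_apply hψs v
  have hDcs : HasCompactSupport fun x => fderiv ℝ ψ x v :=
    IsCompact.of_isClosed_subset hψc (isClosed_tsupport _) (tsupport_fderiv_apply_subset v)
  have hDΩ : tsupport (fun x => fderiv ℝ ψ x v) ⊆ Ω := (tsupport_fderiv_apply_subset v).trans hψΩ
  have IuD : Integrable (fun x => u x * fderiv ℝ ψ x v) (volume.restrict Ω) :=
    integrable_mul_test hΩo hω hu.1.1 hu.1.2 hDc hDcs hDΩ
  have IφD : Integrable (fun x => φ x * fderiv ℝ ψ x v) (volume.restrict Ω) :=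
    ((hφ.1.continuous.mul hDc).integrable_of_hasCompactSupport hDcs.mul_left).restrict
  have Iguψ : Integrable (fun x => (⟪gu x, v⟫ : ℝ) * ψ x) (volume.restrict Ω) :=
    integrable_mul_test hΩo hω (aemeasurable_inner_const hu.2.1.1 v)
      (lintegral_inner_sq_lt_top hu.2.1.2 v) hψs.continuous hψc hψΩ
  have Igφψ : Integrable (fun x => (⟪gradient φ x, v⟫ : ℝ) * ψ x) (volume.restrict Ω) :=
    ((((continuous_gradient hφ.1).inner continuous_const).mul
      hψs.continuous).integrable_of_hasCompactSupport hψc.mul_left).restrict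
  have hu' := hu.2.2 ψ ⟨hψs, hψc, hψΩ⟩ v
  have hφ' := isWeakGradOn_test hφ ψ ⟨hψs, hψc, hψΩ⟩ v
  have lhs : ∫ x in Ω, (u x - t * φ x) * fderiv ℝ ψ x v
      = (∫ x in Ω, u x * fderiv ℝ ψ x v) - t * ∫ x in Ω, φ x * fderiv ℝ ψ x v := by
    rw [show (fun x => (u x - t * φ x) * fderiv ℝ ψ x v)
        = fun x => u x * fderiv ℝ ψ x v - t * (φ x * fderiv ℝ ψ x v) from
        funext fun x => by ring]
    rw [integral_sub IuD (IφD.const_mul t), integral_const_mul]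
  have rhs : ∫ x in Ω, (⟪gu x - t • gradient φ x, v⟫ : ℝ) * ψ x
      = (∫ x in Ω, (⟪gu x, v⟫ : ℝ) * ψ x) - t * ∫ x in Ω, (⟪gradient φ x, v⟫ : ℝ) * ψ x := by
    rw [show (fun x => (⟪gu x - t • gradient φ x, v⟫ : ℝ) * ψ x)
        = fun x => (⟪gu x, v⟫ : ℝ) * ψ x - t * ((⟪gradient φ x, v⟫ : ℝ) * ψ x) from
        funext fun x => by rw [inner_sub_left, real_inner_smul_left]; ring]
    rw [integral_sub Iguψ (Igφψ.const_mul t), integral_const_mul]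
  rw [lhs, rhs, hu', hφ']
  ring

lemma ofReal_shift {f h : ℝ} (hf : 0 ≤ f) (hfh : 0 ≤ f + h) :
    ENNReal.ofReal (f + h) + ENNReal.ofReal (-h) = ENNReal.ofReal f + ENNReal.ofReal h := by
  rcases le_total 0 h with h0 | h0
  · rw [ENNReal.ofReal_add hf h0, ENNReal.ofReal_of_nonpos (neg_nonpos.2 h0), add_zero]
  · rw [ENNReal.ofReal_of_nonpos h0, add_zero, ← ENNReal.ofReal_add hfh (neg_nonneg.2 h0)]
    norm_num

lemma ofReal_le_half_sq_add_one (r : ℝ) :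
    ENNReal.ofReal r ≤ 2⁻¹ * (ENNReal.ofReal (r ^ 2) + 1) := by
  rw [show (1:ℝ≥0∞) = ENNReal.ofReal 1 by simp,
    show ((2:ℝ≥0∞))⁻¹ = ENNReal.ofReal 2⁻¹ by
      rw [ENNReal.ofReal_inv_of_pos (by norm_num : (0:ℝ) < 2)]; norm_num,
    ← ENNReal.ofReal_add (sq_nonneg r) (by norm_num),
    ← ENNReal.ofReal_mul (by norm_num : (0:ℝ) ≤ 2⁻¹)]
  exact ENNReal.ofReal_le_ofReal (by nlinarith [sq_nonneg (r - 1)])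

/-- pointwise indicator bound for `ofReal |⟪gu, gφ⟫| * ω`. -/
lemma inner_indicator_bound {ω : Euc d → ℝ≥0∞} {gu gφ : Euc d → Euc d} {M : ℝ}
    (hM0 : 0 ≤ M) (hM : ∀ x, ‖gφ x‖ ≤ M) (x : Euc d) :
    ENNReal.ofReal |(⟪gu x, gφ x⟫ : ℝ)| * ω x ≤
      (tsupport gφ).indicator
        (fun x => ENNReal.ofReal M * (2⁻¹ * (ENNReal.ofReal (‖gu x‖ ^ 2) * ω x + ω x))) x := by
  by_cases hx : x ∈ tsupport gφ
  · rw [Set.indicator_of_mem hx]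
    have h1 : |(⟪gu x, gφ x⟫ : ℝ)| ≤ M * ‖gu x‖ := by
      calc |(⟪gu x, gφ x⟫ : ℝ)| ≤ ‖gu x‖ * ‖gφ x‖ := abs_real_inner_le_norm _ _
        _ ≤ ‖gu x‖ * M := mul_le_mul_of_nonneg_left (hM x) (norm_nonneg _)
        _ = M * ‖gu x‖ := mul_comm _ _
    calc ENNReal.ofReal |(⟪gu x, gφ x⟫ : ℝ)| * ω x
        ≤ ENNReal.ofReal (M * ‖gu x‖) * ω x :=
          mul_le_mul_left (ENNReal.ofReal_le_ofReal h1) _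
      _ = ENNReal.ofReal M * ENNReal.ofReal (‖gu x‖) * ω x := by
          rw [ENNReal.ofReal_mul hM0]
      _ ≤ ENNReal.ofReal M * (2⁻¹ * (ENNReal.ofReal (‖gu x‖ ^ 2) + 1)) * ω x := by
          exact mul_le_mul_left (mul_le_mul_right (ofReal_le_half_sq_add_one _) _) _
      _ = ENNReal.ofReal M * (2⁻¹ * (ENNReal.ofReal (‖gu x‖ ^ 2) * ω x + ω x)) := by
          ring
  · rw [Set.indicator_of_notMem hx]
    have h0 : gφ x = 0 := image_eq_zero_of_notMem_tsupport hx
    simp [h0]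

/-- finiteness of the indicator bound integral. -/
lemma inner_bound_fin {Ω : Set (Euc d)} (hΩo : IsOpen Ω) {ω : Euc d → ℝ≥0∞} {C₁ : ℝ≥0∞}
    (hω : IsA2On Ω ω C₁) {gu : Euc d → Euc d} (hgum : AEMeasurable gu (volume.restrict Ω))
    (hgu2 : (∫⁻ x in Ω, ENNReal.ofReal (‖gu x‖ ^ 2) * ω x) < ⊤)
    {gφ : Euc d → Euc d} (hgφcs : HasCompactSupport gφ) (hgφΩ : tsupport gφ ⊆ Ω) (M : ℝ) :
    (∫⁻ x in tsupport gφ,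
      ENNReal.ofReal M * (2⁻¹ * (ENNReal.ofReal (‖gu x‖ ^ 2) * ω x + ω x))
        ∂(volume.restrict Ω)) < ⊤ := by
  have hKm : MeasurableSet (tsupport gφ) := (isClosed_tsupport gφ).measurableSet
  rw [lintegral_const_mul' _ _ ENNReal.ofReal_ne_top,
    lintegral_const_mul' _ _ (by norm_num : ((2:ℝ≥0∞))⁻¹ ≠ ⊤),
    lintegral_add_left' (show AEMeasurable (fun a => ENNReal.ofReal (‖gu a‖ ^ 2) * ω a)
      ((volume.restrict Ω).restrict (tsupport gφ)) from
      ((ENNReal.measurable_ofReal.comp_aemeasurable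
        ((hgum.norm.pow_const 2).restrict)).mul (hω.1.aemeasurable.restrict)))]
  refine ENNReal.mul_lt_top ENNReal.ofReal_lt_top (ENNReal.mul_lt_top (by norm_num) ?_)
  refine ENNReal.add_lt_top.2 ⟨?_, ?_⟩
  · rw [Measure.restrict_restrict hKm]
    exact lt_of_le_of_lt (lintegral_mono_set Set.inter_subset_right) hgu2
  · rw [Measure.restrict_restrict hKm, Set.inter_eq_self_of_subset_left hgφΩ]
    exact cpt_finite hΩo (fun z r hr hb => (hω.2.2 z r hr hb).1) hgφcs hgφΩ

/-- The key variational inequality obtained by comparing `u` with `u - 2s·φ`. -/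
lemma key_ineq {Ω : Set (Euc d)} (hΩo : IsOpen Ω) (hΩb : Bornology.IsBounded Ω)
    {ω : Euc d → ℝ≥0∞} {C₁ : ℝ≥0∞} (hω : IsA2On Ω ω C₁)
    {u : Euc d → ℝ} {gu : Euc d → Euc d} (hu : IsMinJ Ω ω u gu)
    {φ : Euc d → ℝ} (hφt : TestOn Ω φ) (hφ0 : ∀ x, 0 ≤ φ x) {s : ℝ} (hs : 0 < s) :
    (∫⁻ x in Ω, ENNReal.ofReal ((⟪gu x, gradient φ x⟫ : ℝ) - s * ‖gradient φ x‖ ^ 2) * ω x)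
      ≤ ∫⁻ x in Ω,
          ENNReal.ofReal (-(⟪gu x, gradient φ x⟫ : ℝ) + s * ‖gradient φ x‖ ^ 2) * ω x := by
  obtain ⟨hmin, hcomp⟩ := hu
  set t : ℝ := 2 * s with ht_def
  have ht : 0 < t := by positivity
  set gφ : Euc d → Euc d := gradient φ with hgφ_def
  have hgφc : Continuous gφ := continuous_gradient hφt.1
  have hgφcs : HasCompactSupport gφ :=
    IsCompact.of_isClosed_subset hφt.2.1 (isClosed_tsupport _) tsupport_gradient_subset
  have hgφΩ : tsupport gφ ⊆ Ω := tsupport_gradient_subset.trans hφt.2.2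
  have hφ2 : (∫⁻ x in Ω, ENNReal.ofReal ((φ x) ^ 2) * ω x) < ⊤ := by
    have h1 := lintegral_sq_test hΩo hω hφt.1.continuous hφt.2.1 hφt.2.2
    have h2 : ∀ x, ENNReal.ofReal (‖φ x‖ ^ 2) * ω x = ENNReal.ofReal ((φ x) ^ 2) * ω x :=
      fun x => by rw [Real.norm_eq_abs, sq_abs]
    rwa [lintegral_congr h2] at h1
  have hgφ2 : (∫⁻ x in Ω, ENNReal.ofReal (‖gφ x‖ ^ 2) * ω x) < ⊤ :=
    lintegral_sq_test hΩo hω hgφc hgφcs hgφΩ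
  have hscale : ∀ (c : ℝ) (f : Euc d → ℝ),
      (∫⁻ x in Ω, ENNReal.ofReal ((f x) ^ 2) * ω x) < ⊤ →
      (∫⁻ x in Ω, ENNReal.ofReal ((c * f x) ^ 2) * ω x) < ⊤ := by
    intro c f hf
    have he : ∀ x, ENNReal.ofReal ((c * f x) ^ 2) * ω x
        = ENNReal.ofReal (c ^ 2) * (ENNReal.ofReal ((f x) ^ 2) * ω x) := fun x => by
      rw [mul_pow, ENNReal.ofReal_mul (sq_nonneg c), mul_assoc]
    rw [lintegral_congr he, lintegral_const_mul' _ _ ENNReal.ofReal_ne_top]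
    exact ENNReal.mul_lt_top ENNReal.ofReal_lt_top hf
  have hsm : ∀ c : ℝ, (∫⁻ x in Ω, ENNReal.ofReal (‖c • gφ x‖ ^ 2) * ω x) < ⊤ := by
    intro c
    have he : ∀ x, ENNReal.ofReal (‖c • gφ x‖ ^ 2) * ω x
        = ENNReal.ofReal ((c * ‖gφ x‖) ^ 2) * ω x := fun x => by
      rw [norm_smul, Real.norm_eq_abs, mul_pow, mul_pow, sq_abs]
    rw [lintegral_congr he]
    exact hscale c _ hgφ2
  set v : Euc d → ℝ := fun x => u x - t * φ x with hv_def
  set gv : Euc d → Euc d := fun x => gu x - t • gφ x with hgv_def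
  have hvL2 : MemL2W Ω ω v := by
    refine ⟨hmin.1.1.sub (continuous_const.mul hφt.1.continuous).aemeasurable, ?_⟩
    refine lintegral_sq_add hω.1 (a := u) (b := fun x => t * φ x) (c := v)
      (fun x => by simp only [hv_def]; nlinarith [sq_nonneg (u x + t * φ x)])
      hmin.1.1 hmin.1.2 (hscale t φ hφ2)
  have hvVec : MemL2WVec Ω ω gv := by
    refine ⟨hmin.2.1.1.sub (hgφc.const_smul t).aemeasurable, ?_⟩
    refine lintegral_sq_add hω.1 (a := fun x => ‖gu x‖) (b := fun x => t * ‖gφ x‖)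
      (c := fun x => ‖gv x‖) (fun x => ?_) hmin.2.1.1.norm hmin.2.1.2
      (hscale t _ (by
        have h2 : ∀ x, ENNReal.ofReal (‖gφ x‖ ^ 2) * ω x
            = ENNReal.ofReal ((‖gφ x‖) ^ 2) * ω x := fun x => rfl
        exact hgφ2))
    · have h1 : ‖gv x‖ ≤ ‖gu x‖ + |t| * ‖gφ x‖ := by
        simp only [hgv_def]
        refine (norm_sub_le _ _).trans ?_
        rw [norm_smul, Real.norm_eq_abs]
      show ‖gv x‖ ^ 2 ≤ 2 * ‖gu x‖ ^ 2 + 2 * (t * ‖gφ x‖) ^ 2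
      have h2 : ‖gv x‖ ^ 2 ≤ (‖gu x‖ + |t| * ‖gφ x‖) ^ 2 :=
        pow_le_pow_left₀ (norm_nonneg (gv x)) h1 2
      nlinarith [sq_nonneg (‖gu x‖ - |t| * ‖gφ x‖), sq_abs t, norm_nonneg (gφ x),
        mul_pow t (‖gφ x‖) 2, mul_pow (|t|) (‖gφ x‖) 2, sq_nonneg (‖gφ x‖)]
  have hvW : IsWeakGradOn Ω v gv := isWeakGradOn_combine hΩo hω hmin hφt t
  have hv : MemH1W Ω ω v gv := ⟨hvL2, hvVec, hvW⟩
  -- the difference is (a multiple of) a test function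
  have htest' : TestOn Ω (fun x => (-t) * φ x) := by
    refine ⟨contDiff_const.mul hφt.1, hφt.2.1.mul_left, ?_⟩
    refine (closure_mono (fun x hx => ?_)).trans hφt.2.2
    simp only [Function.mem_support] at hx ⊢
    exact fun h => hx (by rw [h, mul_zero])
  have hφd : Differentiable ℝ φ := hφt.1.differentiable (by simp)
  have egrad : gradient (fun y => (-t) * φ y) = fun x => (-t) • gφ x :=
    funext fun x => gradient_const_mul hφd (-t) x
  have h10' : MemH10W Ω ω (fun x => (-t) * φ x) (fun x => (-t) • gφ x) := by
    refine ⟨⟨⟨(continuous_const.mul hφt.1.continuous).aemeasurable, hscale (-t) φ hφ2⟩,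
      ⟨(hgφc.const_smul (-t)).aemeasurable, hsm (-t)⟩, ?_⟩,
      fun _ => (fun x => (-t) * φ x), fun _ => htest', ?_⟩
    · have hw := isWeakGradOn_test htest'
      rwa [egrad] at hw
    · have hgoal : ∀ (f : Euc d → ℝ) (g : Euc d → Euc d), (∀ x, f x = 0) → (∀ x, g x = 0) →
          H1errW Ω ω f g = 0 := by
        intro f g hf hg
        have hz : ∀ x, (ENNReal.ofReal ((f x) ^ 2) + ENNReal.ofReal (‖g x‖ ^ 2)) * ω x = 0 :=
          fun x => by rw [hf x, hg x]; simp
        rw [H1errW, lintegral_congr hz, lintegral_zero]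
      simp only [egrad, sub_self]
      rw [hgoal (fun _ => (0:ℝ)) (fun _ => (0:Euc d)) (fun _ => rfl) (fun _ => rfl)]
      exact tendsto_const_nhds
  have hv0 : MemH10W Ω ω (fun x => v x - u x) (fun x => gv x - gu x) := by
    have ev : (fun x => v x - u x) = fun x => (-t) * φ x := funext fun x => by
      simp only [hv_def]; ring
    have eg : (fun x => gv x - gu x) = fun x => (-t) • gφ x := funext fun x => by
      simp only [hgv_def]; rw [neg_smul]; abel
    rw [ev, eg]; exact h10'
  have hJ := hcomp v gv hv hv0
  -- split the functionals
  have hsplitJ : ∀ (f : Euc d → ℝ) (g : Euc d → Euc d), AEMeasurable g (volume.restrict Ω) →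
      JwB Ω ω 1 χpos f g = (∫⁻ x in Ω, ENNReal.ofReal (‖g x‖ ^ 2) * ω x)
        + ∫⁻ x in Ω, ENNReal.ofReal (χpos (f x)) := by
    intro f g hg
    rw [JwB]
    have he : ∀ x, ω x * ENNReal.ofReal (‖g x‖ ^ 2) + ENNReal.ofReal (1 * χpos (f x))
        = ENNReal.ofReal (‖g x‖ ^ 2) * ω x + ENNReal.ofReal (χpos (f x)) := fun x => by
      rw [mul_comm, one_mul]
    rw [lintegral_congr he]
    exact lintegral_add_left' (show AEMeasurable (fun x => ENNReal.ofReal (‖g x‖ ^ 2) * ω x)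
      (volume.restrict Ω) from
      (ENNReal.measurable_ofReal.comp_aemeasurable (hg.norm.pow_const 2)).mul
        hω.1.aemeasurable.restrict) _
  have hXuT : (∫⁻ x in Ω, ENNReal.ofReal (χpos (u x))) < ⊤ := by
    calc (∫⁻ x in Ω, ENNReal.ofReal (χpos (u x))) ≤ ∫⁻ _x in Ω, (1 : ℝ≥0∞) := by
          refine lintegral_mono fun x => ?_
          refine ENNReal.ofReal_le_one.2 ?_
          simp only [χpos]; split_ifs <;> norm_num
      _ = volume Ω := setLIntegral_one Ω
      _ < ⊤ := hΩb.measure_lt_top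
  have hXvu : (∫⁻ x in Ω, ENNReal.ofReal (χpos (v x)))
      ≤ ∫⁻ x in Ω, ENNReal.ofReal (χpos (u x)) := by
    refine lintegral_mono fun x => ENNReal.ofReal_le_ofReal ?_
    simp only [χpos, hv_def]
    split_ifs with h1 h2
    · exact le_refl 1
    · exfalso; have := mul_nonneg ht.le (hφ0 x); push_neg at h2; linarith
    · norm_num
    · exact le_refl 0
  rw [hsplitJ u gu hmin.2.1.1, hsplitJ v gv hvVec.1] at hJ
  have hLR : (∫⁻ x in Ω, ENNReal.ofReal (‖gu x‖ ^ 2) * ω x)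
      ≤ ∫⁻ x in Ω, ENNReal.ofReal (‖gv x‖ ^ 2) * ω x := by
    refine (ENNReal.add_le_add_iff_right hXuT.ne).1 ?_
    exact hJ.trans (add_le_add_right hXvu _)
  -- pointwise rearrangement
  have hptw : ∀ x, (ENNReal.ofReal (‖gv x‖ ^ 2)
        + ENNReal.ofReal (2 * t * (⟪gu x, gφ x⟫ : ℝ) - t ^ 2 * ‖gφ x‖ ^ 2)) * ω x
      = (ENNReal.ofReal (‖gu x‖ ^ 2)
        + ENNReal.ofReal (-(2 * t * (⟪gu x, gφ x⟫ : ℝ)) + t ^ 2 * ‖gφ x‖ ^ 2)) * ω x := by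
    intro x
    have hb : ‖gv x‖ ^ 2 = ‖gu x‖ ^ 2
        + (-(2 * t * (⟪gu x, gφ x⟫ : ℝ)) + t ^ 2 * ‖gφ x‖ ^ 2) := by
      simp only [hgv_def]
      rw [norm_sub_sq_real, real_inner_smul_right, norm_smul, Real.norm_eq_abs,
        mul_pow, sq_abs]
      ring
    have hfh : (0:ℝ) ≤ ‖gu x‖ ^ 2
        + (-(2 * t * (⟪gu x, gφ x⟫ : ℝ)) + t ^ 2 * ‖gφ x‖ ^ 2) := by
      rw [← hb]; exact sq_nonneg _
    have hsh := ofReal_shift (sq_nonneg ‖gu x‖) hfh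
    rw [hb, show 2 * t * (⟪gu x, gφ x⟫ : ℝ) - t ^ 2 * ‖gφ x‖ ^ 2
      = -(-(2 * t * (⟪gu x, gφ x⟫ : ℝ)) + t ^ 2 * ‖gφ x‖ ^ 2) by ring, hsh]
  have hsplit2 : ∀ (F G : Euc d → ℝ≥0∞), AEMeasurable (fun x => F x * ω x) (volume.restrict Ω) →
      (∫⁻ x in Ω, (F x + G x) * ω x)
        = (∫⁻ x in Ω, F x * ω x) + ∫⁻ x in Ω, G x * ω x := by
    intro F G hF
    rw [lintegral_congr (fun x => add_mul (F x) (G x) (ω x)), lintegral_add_left' hF]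
  have hmeasv : AEMeasurable (fun x => ENNReal.ofReal (‖gv x‖ ^ 2) * ω x) (volume.restrict Ω) :=
    (ENNReal.measurable_ofReal.comp_aemeasurable (hvVec.1.norm.pow_const 2)).mul
      hω.1.aemeasurable.restrict
  have hmeasu : AEMeasurable (fun x => ENNReal.ofReal (‖gu x‖ ^ 2) * ω x) (volume.restrict Ω) :=
    (ENNReal.measurable_ofReal.comp_aemeasurable (hmin.2.1.1.norm.pow_const 2)).mul
      hω.1.aemeasurable.restrict
  have hRHm : (∫⁻ x in Ω, ENNReal.ofReal (‖gv x‖ ^ 2) * ω x)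
        + (∫⁻ x in Ω, ENNReal.ofReal (2 * t * (⟪gu x, gφ x⟫ : ℝ) - t ^ 2 * ‖gφ x‖ ^ 2) * ω x)
      = (∫⁻ x in Ω, ENNReal.ofReal (‖gu x‖ ^ 2) * ω x)
        + ∫⁻ x in Ω, ENNReal.ofReal (-(2 * t * (⟪gu x, gφ x⟫ : ℝ)) + t ^ 2 * ‖gφ x‖ ^ 2) * ω x := by
    rw [← hsplit2 _ _ hmeasv, lintegral_congr hptw, hsplit2 _ _ hmeasu]
  have hHm : (∫⁻ x in Ω, ENNReal.ofReal (2 * t * (⟪gu x, gφ x⟫ : ℝ) - t ^ 2 * ‖gφ x‖ ^ 2) * ω x)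
      ≤ ∫⁻ x in Ω, ENNReal.ofReal (-(2 * t * (⟪gu x, gφ x⟫ : ℝ)) + t ^ 2 * ‖gφ x‖ ^ 2) * ω x := by
    refine (ENNReal.add_le_add_iff_left hmin.2.1.2.ne).1 ?_
    calc (∫⁻ x in Ω, ENNReal.ofReal (‖gu x‖ ^ 2) * ω x)
          + (∫⁻ x in Ω, ENNReal.ofReal (2 * t * (⟪gu x, gφ x⟫ : ℝ) - t ^ 2 * ‖gφ x‖ ^ 2) * ω x)
        ≤ (∫⁻ x in Ω, ENNReal.ofReal (‖gv x‖ ^ 2) * ω x)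
          + (∫⁻ x in Ω, ENNReal.ofReal (2 * t * (⟪gu x, gφ x⟫ : ℝ) - t ^ 2 * ‖gφ x‖ ^ 2) * ω x) :=
          add_le_add_left hLR _
      _ = _ := hRHm
  -- factor out 4s
  have hfac : ∀ r : Euc d → ℝ, (∫⁻ x in Ω, ENNReal.ofReal ((4 * s) * r x) * ω x)
      = ENNReal.ofReal (4 * s) * ∫⁻ x in Ω, ENNReal.ofReal (r x) * ω x := by
    intro r
    rw [← lintegral_const_mul' _ _ ENNReal.ofReal_ne_top]
    exact lintegral_congr fun x => by rw [ENNReal.ofReal_mul (by positivity), mul_assoc]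
  have e1 : ∀ x, ENNReal.ofReal (2 * t * (⟪gu x, gφ x⟫ : ℝ) - t ^ 2 * ‖gφ x‖ ^ 2) * ω x
      = ENNReal.ofReal ((4 * s) * ((⟪gu x, gφ x⟫ : ℝ) - s * ‖gφ x‖ ^ 2)) * ω x := fun x => by
    rw [show 2 * t * (⟪gu x, gφ x⟫ : ℝ) - t ^ 2 * ‖gφ x‖ ^ 2
      = (4 * s) * ((⟪gu x, gφ x⟫ : ℝ) - s * ‖gφ x‖ ^ 2) by rw [ht_def]; ring]
  have e2 : ∀ x, ENNReal.ofReal (-(2 * t * (⟪gu x, gφ x⟫ : ℝ)) + t ^ 2 * ‖gφ x‖ ^ 2) * ω x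
      = ENNReal.ofReal ((4 * s) * (-(⟪gu x, gφ x⟫ : ℝ) + s * ‖gφ x‖ ^ 2)) * ω x := fun x => by
    rw [show -(2 * t * (⟪gu x, gφ x⟫ : ℝ)) + t ^ 2 * ‖gφ x‖ ^ 2
      = (4 * s) * (-(⟪gu x, gφ x⟫ : ℝ) + s * ‖gφ x‖ ^ 2) by rw [ht_def]; ring]
  rw [lintegral_congr e1, lintegral_congr e2, hfac, hfac] at hHm
  exact (ENNReal.mul_le_mul_iff_right (ENNReal.ofReal_pos.2 (by positivity)).ne'
    ENNReal.ofReal_ne_top).1 hHm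

end MSaux

/-- For a minimizer `u` of `J(ω, ·, Ω)` subject to its own boundary
values, `div(ω ∇u)` is a nonnegative distribution:
`∫_Ω ω ∇u·∇φ dx ≤ 0` for every nonnegative test function `φ`. -/
theorem minimizer_superharmonic_distribution
    {d : ℕ} (Ω : Set (Euc d)) (hΩo : IsOpen Ω) (hΩc : IsConnected Ω)
    (hΩb : Bornology.IsBounded Ω)
    (ω : Euc d → ℝ≥0∞) (C₁ : ℝ≥0∞) (hω : IsA2On Ω ω C₁)
    (u : Euc d → ℝ) (gu : Euc d → Euc d) (hu : IsMinJ Ω ω u gu) :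
    ∀ φ : Euc d → ℝ, TestOn Ω φ → (∀ x, 0 ≤ φ x) →
      (∫ x in Ω, (ω x).toReal * ⟪gu x, gradient φ x⟫) ≤ 0 := by
  intro φ hφt hφ0
  set gφ : Euc d → Euc d := gradient φ with hgφ_def
  have hgφc : Continuous gφ := MSaux.continuous_gradient hφt.1
  have hgφcs : HasCompactSupport gφ :=
    IsCompact.of_isClosed_subset hφt.2.1 (isClosed_tsupport _) MSaux.tsupport_gradient_subset
  have hgφΩ : tsupport gφ ⊆ Ω := MSaux.tsupport_gradient_subset.trans hφt.2.2
  obtain ⟨M, hM⟩ := hgφcs.exists_bound_of_continuous hgφc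
  have hM0 : 0 ≤ M := le_trans (norm_nonneg _) (hM 0)
  have hKm : MeasurableSet (tsupport gφ) := (isClosed_tsupport gφ).measurableSet
  have hgum : AEMeasurable gu (volume.restrict Ω) := hu.1.2.1.1
  have hgu2 : (∫⁻ x in Ω, ENNReal.ofReal (‖gu x‖ ^ 2) * ω x) < ⊤ := hu.1.2.1.2
  have hpm : AEMeasurable (fun x => (⟪gu x, gφ x⟫ : ℝ)) (volume.restrict Ω) :=
    hgum.inner hgφc.aemeasurable
  have hgφ2 : (∫⁻ x in Ω, ENNReal.ofReal (‖gφ x‖ ^ 2) * ω x) < ⊤ :=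
    MSaux.lintegral_sq_test hΩo hω hgφc hgφcs hgφΩ
  -- finiteness of the absolute inner product integral
  have hPabs : (∫⁻ x in Ω, ENNReal.ofReal |(⟪gu x, gφ x⟫ : ℝ)| * ω x) < ⊤ :=
    MSaux.lintegral_lt_top_of_bound (μ := volume.restrict Ω) hKm
      (Filter.Eventually.of_forall (MSaux.inner_indicator_bound hM0 hM))
      (MSaux.inner_bound_fin hΩo hω hgum hgu2 hgφcs hgφΩ M)
  have hPp_fin : (∫⁻ x in Ω, ENNReal.ofReal ((⟪gu x, gφ x⟫ : ℝ)) * ω x) < ⊤ :=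
    lt_of_le_of_lt (lintegral_mono fun x =>
      mul_le_mul_left (ENNReal.ofReal_le_ofReal (le_abs_self _)) _) hPabs
  have hPm_fin : (∫⁻ x in Ω, ENNReal.ofReal (-(⟪gu x, gφ x⟫ : ℝ)) * ω x) < ⊤ :=
    lt_of_le_of_lt (lintegral_mono fun x =>
      mul_le_mul_left (ENNReal.ofReal_le_ofReal (neg_le_abs _)) _) hPabs
  -- Step 2 : for every s > 0, Pp ≤ Pm + s·2Q
  have step2 : ∀ s : ℝ, 0 < s →
      (∫⁻ x in Ω, ENNReal.ofReal ((⟪gu x, gφ x⟫ : ℝ)) * ω x)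
        ≤ (∫⁻ x in Ω, ENNReal.ofReal (-(⟪gu x, gφ x⟫ : ℝ)) * ω x)
          + ENNReal.ofReal s * (2 * ∫⁻ x in Ω, ENNReal.ofReal (‖gφ x‖ ^ 2) * ω x) := by
    intro s hs
    have k := MSaux.key_ineq hΩo hΩb hω hu hφt hφ0 hs
    have hsQ : (∫⁻ x in Ω, ENNReal.ofReal (s * ‖gφ x‖ ^ 2) * ω x)
        = ENNReal.ofReal s * ∫⁻ x in Ω, ENNReal.ofReal (‖gφ x‖ ^ 2) * ω x := by
      rw [← lintegral_const_mul' _ _ ENNReal.ofReal_ne_top]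
      exact lintegral_congr fun x => by rw [ENNReal.ofReal_mul hs.le, mul_assoc]
    have hmeas1 : AEMeasurable
        (fun x => ENNReal.ofReal ((⟪gu x, gφ x⟫ : ℝ) - s * ‖gφ x‖ ^ 2) * ω x)
        (volume.restrict Ω) :=
      (ENNReal.measurable_ofReal.comp_aemeasurable
        (hpm.sub (continuous_const.mul ((hgφc.norm.pow 2))).aemeasurable)).mul
        hω.1.aemeasurable.restrict
    have hmeas2 : AEMeasurable (fun x => ENNReal.ofReal (-(⟪gu x, gφ x⟫ : ℝ)) * ω x)
        (volume.restrict Ω) :=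
      (ENNReal.measurable_ofReal.comp_aemeasurable hpm.neg).mul hω.1.aemeasurable.restrict
    calc (∫⁻ x in Ω, ENNReal.ofReal ((⟪gu x, gφ x⟫ : ℝ)) * ω x)
        ≤ ∫⁻ x in Ω, (ENNReal.ofReal ((⟪gu x, gφ x⟫ : ℝ) - s * ‖gφ x‖ ^ 2) * ω x
            + ENNReal.ofReal (s * ‖gφ x‖ ^ 2) * ω x) := by
          refine lintegral_mono fun x => ?_
          rw [← add_mul]
          refine mul_le_mul_left ?_ _
          calc ENNReal.ofReal ((⟪gu x, gφ x⟫ : ℝ))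
              = ENNReal.ofReal (((⟪gu x, gφ x⟫ : ℝ) - s * ‖gφ x‖ ^ 2) + s * ‖gφ x‖ ^ 2) := by
                rw [sub_add_cancel]
            _ ≤ _ := ENNReal.ofReal_add_le
      _ = (∫⁻ x in Ω, ENNReal.ofReal ((⟪gu x, gφ x⟫ : ℝ) - s * ‖gφ x‖ ^ 2) * ω x)
          + ∫⁻ x in Ω, ENNReal.ofReal (s * ‖gφ x‖ ^ 2) * ω x := lintegral_add_left' hmeas1 _
      _ ≤ (∫⁻ x in Ω, ENNReal.ofReal (-(⟪gu x, gφ x⟫ : ℝ) + s * ‖gφ x‖ ^ 2) * ω x)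
          + ∫⁻ x in Ω, ENNReal.ofReal (s * ‖gφ x‖ ^ 2) * ω x := add_le_add_left k _
      _ ≤ ((∫⁻ x in Ω, ENNReal.ofReal (-(⟪gu x, gφ x⟫ : ℝ)) * ω x)
            + ∫⁻ x in Ω, ENNReal.ofReal (s * ‖gφ x‖ ^ 2) * ω x)
          + ∫⁻ x in Ω, ENNReal.ofReal (s * ‖gφ x‖ ^ 2) * ω x := by
          refine add_le_add_left ?_ _
          calc (∫⁻ x in Ω, ENNReal.ofReal (-(⟪gu x, gφ x⟫ : ℝ) + s * ‖gφ x‖ ^ 2) * ω x)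
              ≤ ∫⁻ x in Ω, (ENNReal.ofReal (-(⟪gu x, gφ x⟫ : ℝ)) * ω x
                  + ENNReal.ofReal (s * ‖gφ x‖ ^ 2) * ω x) := by
                refine lintegral_mono fun x => ?_
                rw [← add_mul]
                exact mul_le_mul_left ENNReal.ofReal_add_le _
            _ = _ := lintegral_add_left' hmeas2 _
      _ = (∫⁻ x in Ω, ENNReal.ofReal (-(⟪gu x, gφ x⟫ : ℝ)) * ω x)
          + ENNReal.ofReal s * (2 * ∫⁻ x in Ω, ENNReal.ofReal (‖gφ x‖ ^ 2) * ω x) := by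
          rw [hsQ]; ring
  -- deduce Pp ≤ Pm
  have hPpPm : (∫⁻ x in Ω, ENNReal.ofReal ((⟪gu x, gφ x⟫ : ℝ)) * ω x)
      ≤ ∫⁻ x in Ω, ENNReal.ofReal (-(⟪gu x, gφ x⟫ : ℝ)) * ω x := by
    refine ENNReal.le_of_forall_pos_le_add fun ε hε _ => ?_
    have h2Q : (2 * ∫⁻ x in Ω, ENNReal.ofReal (‖gφ x‖ ^ 2) * ω x) ≠ ⊤ :=
      (ENNReal.mul_lt_top (by norm_num) hgφ2).ne
    set c : ℝ := (2 * ∫⁻ x in Ω, ENNReal.ofReal (‖gφ x‖ ^ 2) * ω x).toReal with hc_def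
    have hc0 : 0 ≤ c := ENNReal.toReal_nonneg
    have hε' : (0:ℝ) < ε := hε
    have hs : 0 < (ε : ℝ) / (c + 1) := div_pos hε' (by linarith)
    refine (step2 _ hs).trans (add_le_add_right ?_ _)
    rw [show (2 * ∫⁻ x in Ω, ENNReal.ofReal (‖gφ x‖ ^ 2) * ω x) = ENNReal.ofReal c from
      (ENNReal.ofReal_toReal h2Q).symm, ← ENNReal.ofReal_mul hs.le]
    calc ENNReal.ofReal ((ε : ℝ) / (c + 1) * c) ≤ ENNReal.ofReal (ε : ℝ) := by
          refine ENNReal.ofReal_le_ofReal ?_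
          rw [div_mul_eq_mul_div, div_le_iff₀ (by linarith : (0:ℝ) < c + 1)]
          nlinarith
      _ = (ε : ℝ≥0∞) := ENNReal.ofReal_coe_nnreal
  -- convert to the Bochner integral
  have hFi : Integrable (fun x => (ω x).toReal * (⟪gu x, gφ x⟫ : ℝ)) (volume.restrict Ω) := by
    refine MSaux.integrable_of_bound
      ((hω.1.ennreal_toReal.aemeasurable.restrict.mul hpm).aestronglyMeasurable) hKm
      (b := fun x => ENNReal.ofReal M
        * (2⁻¹ * (ENNReal.ofReal (‖gu x‖ ^ 2) * ω x + ω x)))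
      (Filter.Eventually.of_forall fun x => ?_)
      (MSaux.inner_bound_fin hΩo hω hgum hgu2 hgφcs hgφΩ M)
    calc ENNReal.ofReal |(ω x).toReal * (⟪gu x, gφ x⟫ : ℝ)|
        = ENNReal.ofReal ((ω x).toReal * |(⟪gu x, gφ x⟫ : ℝ)|) := by
          rw [abs_mul, abs_of_nonneg ENNReal.toReal_nonneg]
      _ = ENNReal.ofReal ((ω x).toReal) * ENNReal.ofReal |(⟪gu x, gφ x⟫ : ℝ)| :=
          ENNReal.ofReal_mul ENNReal.toReal_nonneg
      _ ≤ ω x * ENNReal.ofReal |(⟪gu x, gφ x⟫ : ℝ)| :=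
          mul_le_mul_left ENNReal.ofReal_toReal_le _
      _ = ENNReal.ofReal |(⟪gu x, gφ x⟫ : ℝ)| * ω x := mul_comm _ _
      _ ≤ _ := MSaux.inner_indicator_bound hM0 hM x
  have haefin := MSaux.ae_finK hΩo hω hgφcs hgφΩ
  have haep : ∀ᵐ x ∂(volume.restrict Ω),
      ENNReal.ofReal ((ω x).toReal * (⟪gu x, gφ x⟫ : ℝ))
        = ENNReal.ofReal ((⟪gu x, gφ x⟫ : ℝ)) * ω x := by
    filter_upwards [haefin] with x hfin
    by_cases hx : x ∈ tsupport gφ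
    · rw [ENNReal.ofReal_mul ENNReal.toReal_nonneg, ENNReal.ofReal_toReal (hfin hx).ne,
        mul_comm]
    · have h0 : gφ x = 0 := image_eq_zero_of_notMem_tsupport hx
      simp [h0]
  have haem : ∀ᵐ x ∂(volume.restrict Ω),
      ENNReal.ofReal (-((ω x).toReal * (⟪gu x, gφ x⟫ : ℝ)))
        = ENNReal.ofReal (-(⟪gu x, gφ x⟫ : ℝ)) * ω x := by
    filter_upwards [haefin] with x hfin
    by_cases hx : x ∈ tsupport gφ
    · rw [show -((ω x).toReal * (⟪gu x, gφ x⟫ : ℝ))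
          = (ω x).toReal * (-(⟪gu x, gφ x⟫ : ℝ)) by ring,
        ENNReal.ofReal_mul ENNReal.toReal_nonneg, ENNReal.ofReal_toReal (hfin hx).ne,
        mul_comm]
    · have h0 : gφ x = 0 := image_eq_zero_of_notMem_tsupport hx
      simp [h0]
  have hint := integral_eq_lintegral_pos_part_sub_lintegral_neg_part hFi
  rw [lintegral_congr_ae haep, lintegral_congr_ae haem] at hint
  rw [hint]
  have hle := ENNReal.toReal_mono hPm_fin.ne hPpPm
  linarith
end

section
/- Let ω be an A2 weight defined near 0 ∈ ℝ^d and suppose hypothesis (H2) holds: for some −d < α ≤ 0, the rescalings ω_λ(x) := λ^{|α|} ω(λx) converge in L¹_loc, as λ → 0⁺, to an A2 weight ω₀. Then there exist constants 0 < τ⋆ ≤ L < ∞ such that τ⋆ r^α ≤ ⨍_{B_r(0)} ω(x) dx ≤ L r^α for all sufficiently small r > 0. -/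
open MeasureTheory ENNReal Metric Set Filter
open scoped RealInnerProductSpace ENNReal NNReal

section Aux

open MeasureTheory ENNReal Metric Set Filter

/-- Change of variables for scaling in a lintegral over a ball. -/
lemma lintegral_ball_scaling {d : ℕ} (ω : Euc d → ℝ≥0∞) (hm : Measurable ω)
    {r : ℝ} (hr : 0 < r) :
    ∫⁻ x in ball (0 : Euc d) r, ω x
      = ENNReal.ofReal (r ^ d) * ∫⁻ x in ball (0 : Euc d) 1, ω (r • x) := by
  have hsm : Measurable fun x : Euc d => r • x := measurable_const_smul r
  have hgm : Measurable ((ball (0 : Euc d) r).indicator ω) :=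
    hm.indicator measurableSet_ball
  have hind : ∀ x : Euc d, (ball (0 : Euc d) 1).indicator (fun x => ω (r • x)) x
      = (ball (0 : Euc d) r).indicator ω (r • x) := by
    intro x
    have hmem : x ∈ ball (0 : Euc d) 1 ↔ r • x ∈ ball (0 : Euc d) r := by
      simp only [mem_ball, dist_zero_right, norm_smul, Real.norm_eq_abs, abs_of_pos hr]
      constructor
      · intro h; calc r * ‖x‖ < r * 1 := by nlinarith
          _ = r := mul_one r
      · intro h; nlinarith [hr]
    by_cases hx : x ∈ ball (0 : Euc d) 1
    · rw [indicator_of_mem hx, indicator_of_mem (hmem.mp hx)]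
    · rw [indicator_of_notMem hx, indicator_of_notMem (fun h => hx (hmem.mpr h))]
  have key : ∫⁻ x in ball (0 : Euc d) 1, ω (r • x)
      = ∫⁻ x, (ball (0 : Euc d) r).indicator ω (r • x) := by
    rw [← lintegral_indicator measurableSet_ball _]
    exact lintegral_congr hind
  have hmap : ∫⁻ x, (ball (0 : Euc d) r).indicator ω (r • x)
      = ENNReal.ofReal (abs ((r ^ d)⁻¹)) * ∫⁻ x, (ball (0 : Euc d) r).indicator ω x := by
    calc ∫⁻ x, (ball (0 : Euc d) r).indicator ω (r • x)
        = ∫⁻ y, (ball (0 : Euc d) r).indicator ω y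
            ∂(Measure.map (fun x : Euc d => r • x) volume) :=
          (lintegral_map hgm hsm).symm
      _ = ENNReal.ofReal (abs ((r ^ d)⁻¹)) * ∫⁻ x, (ball (0 : Euc d) r).indicator ω x := by
          have := MeasureTheory.Measure.map_addHaar_smul
            (μ := (volume : Measure (Euc d))) (r := r) hr.ne'
          simp only [finrank_euclideanSpace_fin] at this
          rw [show (fun x : Euc d => r • x) = (r • ·) from rfl, this,
            lintegral_smul_measure, smul_eq_mul]
  have hrd : (0:ℝ) < r ^ d := pow_pos hr d
  rw [key, hmap, ← lintegral_indicator measurableSet_ball _, ← mul_assoc,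
    abs_of_pos (inv_pos.mpr hrd), ENNReal.ofReal_inv_of_pos hrd,
    ENNReal.mul_inv_cancel (ENNReal.ofReal_pos.mpr hrd).ne' ENNReal.ofReal_ne_top, one_mul]

end Aux

/-- Under hypothesis (H2) at `0` with homogeneity `α`, the averages of
`ω` over small balls centered at `0` are comparable to `r^α`:
`τ⋆ r^α ≤ ⨍_{B_r(0)} ω ≤ L r^α` for all sufficiently small `r`. -/
theorem average_growth_under_H2
    {d : ℕ} (ω ω₀ : Euc d → ℝ≥0∞) (C₁ C₀ : ℝ≥0∞)
    (hω : IsA2On (ball (0 : Euc d) 1) ω C₁) (hω₀ : IsA2On univ ω₀ C₀)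
    (α : ℝ) (hα₁ : -(d : ℝ) < α) (hα₂ : α ≤ 0)
    (hH2 : H2At ω ω₀ 0 α) :
    ∃ τstar L r₀ : ℝ, 0 < τstar ∧ τstar ≤ L ∧ 0 < r₀ ∧
      ∀ r : ℝ, 0 < r → r < r₀ →
        ENNReal.ofReal (τstar * r ^ α) ≤
            (∫⁻ x in ball (0 : Euc d) r, ω x) / volume (ball (0 : Euc d) r) ∧
        (∫⁻ x in ball (0 : Euc d) r, ω x) / volume (ball (0 : Euc d) r) ≤
            ENNReal.ofReal (L * r ^ α) := by
  classical
  set V : ℝ≥0∞ := volume (ball (0 : Euc d) 1) with hVdef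
  have hV0 : V ≠ 0 := (measure_ball_pos volume 0 one_pos).ne'
  have hVtop : V ≠ ⊤ := measure_ball_lt_top.ne
  set c : ℝ≥0∞ := ∫⁻ x in ball (0 : Euc d) 1, ω₀ x with hcdef
  have hctop : c ≠ ⊤ := (hω₀.2.2 0 1 one_pos (subset_univ _)).1.ne
  have hc0 : c ≠ 0 := by
    have hae : ∀ᵐ x ∂(volume : Measure (Euc d)), 0 < ω₀ x := by
      have := hω₀.2.1; rwa [Measure.restrict_univ] at this
    have hz : (volume : Measure (Euc d)) {x | ω₀ x = 0} = 0 := by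
      refine measure_mono_null (fun x hx => ?_) (ae_iff.mp hae)
      simp only [mem_setOf_eq] at hx ⊢
      simp [hx]
    have hcompl : (volume.restrict (ball (0 : Euc d) 1)) (Function.support ω₀)ᶜ = 0 := by
      have hsub : (Function.support ω₀)ᶜ ⊆ {x | ω₀ x = 0} := fun x hx => by
        simpa [Function.mem_support, not_not] using hx
      refine le_antisymm (le_trans (measure_mono hsub) ?_) zero_le
      exact le_trans (Measure.restrict_apply_le _ _) hz.le
    have hsupp : 0 < (volume.restrict (ball (0 : Euc d) 1)) (Function.support ω₀) := by
      by_contra h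
      push_neg at h
      have h0 : (volume.restrict (ball (0 : Euc d) 1)) (Function.support ω₀) = 0 :=
        le_antisymm h zero_le
      have huniv : (volume.restrict (ball (0 : Euc d) 1)) univ = 0 := by
        have := measure_union_le (μ := volume.restrict (ball (0 : Euc d) 1))
          (Function.support ω₀) (Function.support ω₀)ᶜ
        rw [union_compl_self, h0, hcompl] at this
        simpa using this
      rw [Measure.restrict_apply_univ] at huniv
      exact hV0 huniv
    rw [← lintegral_pos_iff_support hω₀.1] at hsupp
    exact hsupp.ne'
  set F : ℝ → ℝ≥0∞ := fun lam =>
    ∫⁻ x in ball (0 : Euc d) 1,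
      ENNReal.ofReal (lam ^ (-α)) * ω ((0 : Euc d) + lam • x) with hFdef
  have hhalf : (0 : ℝ≥0∞) < c / 2 := ENNReal.div_pos hc0 ENNReal.ofNat_ne_top
  have hD := hH2 1 one_pos
  have hev : ∀ᶠ lam in nhdsWithin (0:ℝ) (Ioi 0),
      (∫⁻ x in ball (0 : Euc d) 1,
        ennDiff (ENNReal.ofReal (lam ^ (-α)) * ω ((0 : Euc d) + lam • x)) (ω₀ x)) < c / 2 :=
    hD.eventually_lt_const hhalf
  have hmem : ∀ᶠ lam in nhdsWithin (0:ℝ) (Ioi 0), lam ∈ Ioi (0:ℝ) :=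
    eventually_mem_nhdsWithin
  have hFev : ∀ᶠ lam in nhdsWithin (0:ℝ) (Ioi 0), c / 2 ≤ F lam ∧ F lam ≤ 2 * c := by
    filter_upwards [hev, hmem] with lam hDlt hlam
    set f : Euc d → ℝ≥0∞ := fun x =>
      ENNReal.ofReal (lam ^ (-α)) * ω ((0 : Euc d) + lam • x) with hfdef
    have hfm : Measurable f := by
      apply Measurable.const_mul
      exact hω.1.comp ((measurable_const_smul lam).const_add (0 : Euc d))
    have hDval := hDlt
    have hupper : F lam ≤ 2 * c := by
      have hpt : ∀ x, f x ≤ ω₀ x + ennDiff (f x) (ω₀ x) := fun x =>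
        le_add_tsub.trans (add_le_add_right le_self_add _)
      calc F lam ≤ ∫⁻ x in ball (0 : Euc d) 1, (ω₀ x + ennDiff (f x) (ω₀ x)) :=
            lintegral_mono (fun x => hpt x)
        _ = c + ∫⁻ x in ball (0 : Euc d) 1, ennDiff (f x) (ω₀ x) :=
            lintegral_add_left hω₀.1 _
        _ ≤ c + c / 2 := add_le_add_right hDval.le _
        _ ≤ 2 * c := by
            rw [two_mul]; exact add_le_add_right ENNReal.half_le_self _
    have hlower : c / 2 ≤ F lam := by
      have hpt : ∀ x, ω₀ x ≤ f x + ennDiff (f x) (ω₀ x) := fun x =>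
        le_add_tsub.trans (add_le_add_right le_add_self _)
      have hle : c ≤ F lam + ∫⁻ x in ball (0 : Euc d) 1, ennDiff (f x) (ω₀ x) := by
        calc c ≤ ∫⁻ x in ball (0 : Euc d) 1, (f x + ennDiff (f x) (ω₀ x)) :=
              lintegral_mono (fun x => hpt x)
          _ = F lam + ∫⁻ x in ball (0 : Euc d) 1, ennDiff (f x) (ω₀ x) :=
              lintegral_add_left hfm _
      have hle2 : c ≤ F lam + c / 2 :=
        hle.trans (add_le_add_right hDval.le _)
      have := tsub_le_iff_right.mpr hle2
      rwa [ENNReal.sub_half hctop] at this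
    exact ⟨hlower, hupper⟩
  rw [eventually_nhdsWithin_iff, Metric.eventually_nhds_iff] at hFev
  obtain ⟨ε, hε, hball⟩ := hFev
  set τE : ℝ≥0∞ := (c / 2) / V with hτEdef
  set LE : ℝ≥0∞ := (2 * c) / V with hLEdef
  have hτE0 : τE ≠ 0 := (ENNReal.div_pos hhalf.ne' hVtop).ne'
  have hτEtop : τE ≠ ⊤ := (ENNReal.div_lt_top
    (ENNReal.div_lt_top hctop (by norm_num)).ne hV0).ne
  have hLEtop : LE ≠ ⊤ := (ENNReal.div_lt_top
    (ENNReal.mul_ne_top ENNReal.ofNat_ne_top hctop) hV0).ne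
  refine ⟨τE.toReal, LE.toReal, ε, ENNReal.toReal_pos hτE0 hτEtop, ?_, hε, ?_⟩
  · exact ENNReal.toReal_mono hLEtop
      (ENNReal.div_le_div
        (ENNReal.half_le_self.trans (le_mul_of_one_le_left zero_le one_le_two)) le_rfl)
  · intro r hr hrε
    have hdist : dist r (0:ℝ) < ε := by
      rw [Real.dist_eq, sub_zero, abs_of_pos hr]; exact hrε
    obtain ⟨hF1, hF2⟩ := hball hdist (mem_Ioi.mpr hr)
    have hGm : Measurable fun x : Euc d => ω ((0 : Euc d) + r • x) :=
      hω.1.comp ((measurable_const_smul r).const_add (0 : Euc d))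
    have hI : ∫⁻ x in ball (0 : Euc d) r, ω x
        = ENNReal.ofReal (r ^ d) * ∫⁻ x in ball (0 : Euc d) 1, ω (r • x) :=
      lintegral_ball_scaling ω hω.1 hr
    have hvol : volume (ball (0 : Euc d) r) = ENNReal.ofReal (r ^ d) * V := by
      rw [← smul_unitBall_of_pos hr, Measure.addHaar_smul, finrank_euclideanSpace_fin,
        abs_of_pos (pow_pos hr d)]
    have hFr : F r = ENNReal.ofReal (r ^ (-α)) *
        ∫⁻ x in ball (0 : Euc d) 1, ω (r • x) := by
      rw [hFdef]
      simp only [zero_add] at hGm ⊢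
      exact lintegral_const_mul _ hGm
    have hcancel : ENNReal.ofReal (r ^ α) * ENNReal.ofReal (r ^ (-α)) = 1 := by
      rw [← ENNReal.ofReal_mul (Real.rpow_nonneg hr.le α), ← Real.rpow_add hr,
        add_neg_cancel, Real.rpow_zero, ENNReal.ofReal_one]
    have hG : (∫⁻ x in ball (0 : Euc d) 1, ω (r • x))
        = ENNReal.ofReal (r ^ α) * F r := by
      rw [hFr, ← mul_assoc, hcancel, one_mul]
    have hA : (∫⁻ x in ball (0 : Euc d) r, ω x) / volume (ball (0 : Euc d) r)
        = ENNReal.ofReal (r ^ α) * F r / V := by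
      rw [hI, hvol, hG, ENNReal.mul_div_mul_left _ _
        (ENNReal.ofReal_pos.mpr (pow_pos hr d)).ne' ENNReal.ofReal_ne_top]
    constructor
    · rw [hA]
      calc ENNReal.ofReal (τE.toReal * r ^ α)
          = ENNReal.ofReal τE.toReal * ENNReal.ofReal (r ^ α) :=
            ENNReal.ofReal_mul ENNReal.toReal_nonneg
        _ = ENNReal.ofReal (r ^ α) * τE := by
            rw [ENNReal.ofReal_toReal hτEtop, mul_comm]
        _ ≤ ENNReal.ofReal (r ^ α) * (F r / V) :=
            mul_le_mul_right (ENNReal.div_le_div hF1 le_rfl) _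
        _ = ENNReal.ofReal (r ^ α) * F r / V := (mul_div_assoc _ _ _).symm
    · rw [hA]
      calc ENNReal.ofReal (r ^ α) * F r / V
          = ENNReal.ofReal (r ^ α) * (F r / V) := mul_div_assoc _ _ _
        _ ≤ ENNReal.ofReal (r ^ α) * LE :=
            mul_le_mul_right (ENNReal.div_le_div hF2 le_rfl) _
        _ = ENNReal.ofReal (LE.toReal * r ^ α) := by
            rw [ENNReal.ofReal_mul ENNReal.toReal_nonneg,
              ENNReal.ofReal_toReal hLEtop, mul_comm]
end
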